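/- In the Dante MDP with horizon T, if policies π_2,...,π_T always stay in the same row except π_2 which moves down with probability εT, then: the behavioral-cloning choice for π_1 (always go straight) yields performance gap J(π_E) − J({π_BC, π_2,...,π_T}) = εT(T−1), while the MMDP choice for π_1 (go up) yields gap 0. -/

import Mathlib

open scoped BigOperators

/-- A finite-horizon Markov decision process (dynamics part): transition kernel and
initial state distribution. -/
structure FinMDP (S A : Type) where
  trans : S → A → PMF S
  init : PMF S

/-- A nonstationary (time-indexed) stochastic policy. -/
abbrev Policy (S A : Type) := ℕ → S → PMF A

namespace FinMDP

variable {S A : Type}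

/-- One step of the state-action occupancy dynamics under policy `π` at time `t`. -/
noncomputable def step (M : FinMDP S A) (π : Policy S A) (t : ℕ) (p : PMF (S × A)) :
    PMF (S × A) :=
  p.bind fun sa => (M.trans sa.1 sa.2).bind fun s' => (π t s').map fun a' => (s', a')

/-- The state-action visitation distribution of policy `π` at time `t`. -/
noncomputable def visit (M : FinMDP S A) (π : Policy S A) : ℕ → PMF (S × A)
  | 0 => M.init.bind fun s => (π 0 s).map fun a => (s, a)
  | t + 1 => M.step π (t + 1) (M.visit π t)

/-- Expectation of a reward `f` under a state-action distribution. -/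
noncomputable def expF [Fintype S] [Fintype A] (p : PMF (S × A)) (f : S → A → ℝ) : ℝ :=
  ∑ sa : S × A, (p sa).toReal * f sa.1 sa.2

/-- Value of policy `π` under reward `f` over horizon `T`. -/
noncomputable def J [Fintype S] [Fintype A] (M : FinMDP S A) (π : Policy S A)
    (f : S → A → ℝ) (T : ℕ) : ℝ :=
  ∑ t ∈ Finset.range T, expF (M.visit π t) f

/-- State-action visitation distribution of a rollout of `π` started at `sa` at time `t`,
after `k` further steps. -/
noncomputable def visitFrom (M : FinMDP S A) (π : Policy S A) (t : ℕ) (sa : S × A) :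
    ℕ → PMF (S × A)
  | 0 => PMF.pure sa
  | k + 1 => M.step π (t + k + 1) (M.visitFrom π t sa k)

/-- `Q` value: expected cumulative `f` of rolling out `π` from `(s, a)` at time `t`
until the end of horizon `T`. -/
noncomputable def Q [Fintype S] [Fintype A] (M : FinMDP S A) (π : Policy S A)
    (f : S → A → ℝ) (T t : ℕ) (s : S) (a : A) : ℝ :=
  ∑ k ∈ Finset.range (T - t), expF (M.visitFrom π t (s, a) k) f

end FinMDP

namespace Dante

/-- Row reached from row `s` after action `a` (`0` = move up, `1` = stay, `2` = move down),
clamped to the three rows (`0` = top, `2` = bottom). -/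
def move (s a : Fin 3) : Fin 3 :=
  ⟨min 2 (if a.val = 0 then s.val - 1 else if a.val = 1 then s.val else s.val + 1), by
    have := Nat.min_le_left 2 (if a.val = 0 then s.val - 1 else if a.val = 1 then s.val
      else s.val + 1)
    omega⟩

/-- The Dante MDP: three rows, deterministic row dynamics, start in the middle row. -/
noncomputable def M : FinMDP (Fin 3) (Fin 3) where
  trans s a := PMF.pure (move s a)
  init := PMF.pure 1

/-- Reward `1` for ending the step in one of the top two rows, `0` in the bottom row. -/
noncomputable def r (s a : Fin 3) : ℝ := if (move s a).val ≤ 1 then 1 else 0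

/-- The expert always stays (in the middle row). -/
noncomputable def πE : Policy (Fin 3) (Fin 3) := fun _ _ => PMF.pure 1

/-- The fixed future policies `π_2, …, π_T`: `π_2` (time index `1`) moves down with
probability `p` and stays otherwise; all later policies always stay. -/
noncomputable def tail (p : ENNReal) (hp : p ≤ 1) : Policy (Fin 3) (Fin 3) := fun t _ =>
  if t = 1 then (PMF.bernoulli p.toNNReal (by simpa using ENNReal.toNNReal_mono ENNReal.one_ne_top hp)).map (fun b => if b then 2 else 1)
  else PMF.pure 1

/-- Behavioral cloning's choice for `π_1`: exactly match the expert's action (stay). -/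
noncomputable def πBC (p : ENNReal) (hp : p ≤ 1) : Policy (Fin 3) (Fin 3) := fun t s =>
  if t = 0 then PMF.pure 1 else tail p hp t s

/-- MMDP's choice for `π_1`: move up, anticipating the future policies' mistake. -/
noncomputable def πMMDP (p : ENNReal) (hp : p ≤ 1) : Policy (Fin 3) (Fin 3) := fun t s =>
  if t = 0 then PMF.pure 0 else tail p hp t s

end Dante

/-!
From time 2 on every policy involved stays, and staying in a row keeps earning the reward of
the row entered by the previous action (`r` only depends on the row reached). Hence the
state-action law at every time `t ≥ 1` gives the same expected reward as at time `1`, and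
`J (n + 1) = E[r at time 0] + n · E[r at time 1]`. Staying first (BC) leaves the agent in the
middle row, from which `π_2`'s down-move reaches the bottom row with probability `εT`, losing
`εT` at each of the remaining `T - 1` steps; moving up first (MMDP) turns that down-move into
a move back to the rewarded middle row.
-/

namespace FinMDP

variable {S A : Type} [Fintype S] [Fintype A]

theorem expF_pure (sa : S × A) (f : S → A → ℝ) : expF (PMF.pure sa) f = f sa.1 sa.2 := by
  classical
  simp [expF, PMF.pure_apply, apply_ite ENNReal.toReal, ite_mul]

theorem expF_bind {α : Type} [Fintype α] (p : PMF α) (q : α → PMF (S × A)) (f : S → A → ℝ) :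
    expF (p.bind q) f = ∑ x, (p x).toReal * expF (q x) f := by
  simp only [expF, PMF.bind_apply, tsum_fintype, Finset.mul_sum]
  rw [Finset.sum_comm]
  refine Finset.sum_congr rfl fun sa _ => ?_
  rw [ENNReal.toReal_sum fun x _ => ENNReal.mul_ne_top (PMF.apply_ne_top _ _)
    (PMF.apply_ne_top _ _), Finset.sum_mul]
  simp only [ENNReal.toReal_mul, mul_assoc]

theorem expF_map {α : Type} [Fintype α] (p : PMF α) (g : α → S × A) (f : S → A → ℝ) :
    expF (p.map g) f = ∑ x, (p x).toReal * f (g x).1 (g x).2 := by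
  simp only [← PMF.bind_pure_comp, expF_bind, Function.comp, expF_pure]

theorem J_succ_of_expF_visit_succ (M : FinMDP S A) (π : Policy S A) (f : S → A → ℝ) {c : ℝ}
    (h : ∀ t, expF (M.visit π (t + 1)) f = c) (n : ℕ) :
    M.J π f (n + 1) = expF (M.visit π 0) f + n * c := by
  simp [J, Finset.sum_range_succ', h, add_comm]

end FinMDP

namespace Dante

open FinMDP

theorem move_stay : ∀ s : Fin 3, move s 1 = s := by decide

def settle (sa : Fin 3 × Fin 3) : Fin 3 × Fin 3 := (move sa.1 sa.2, 1)

theorem settle_settle (sa : Fin 3 × Fin 3) : settle (settle sa) = settle sa := by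
  simp [settle, move_stay]

theorem expF_map_settle (p : PMF (Fin 3 × Fin 3)) : expF (p.map settle) r = expF p r := by
  rw [expF_map]
  exact Finset.sum_congr rfl fun sa _ => by simp [settle, r, move_stay]

theorem step_of_stay {π : Policy (Fin 3) (Fin 3)} {t : ℕ} (h : ∀ s, π t s = PMF.pure 1)
    (p : PMF (Fin 3 × Fin 3)) : M.step π t p = p.map settle := by
  simp [step, M, h, settle, ← PMF.bind_pure_comp, Function.comp_def]

section StayFromTwo

variable {π : Policy (Fin 3) (Fin 3)} (hπ : ∀ t ≥ 2, ∀ s, π t s = PMF.pure 1)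
include hπ

theorem visit_add_two_of_stay (k : ℕ) : M.visit π (k + 2) = (M.visit π 1).map settle := by
  induction k with
  | zero => exact step_of_stay (hπ 2 le_rfl) _
  | succ k ih =>
    rw [visit, ih, step_of_stay (hπ _ (by omega)), PMF.map_comp]
    simp only [Function.comp_def, settle_settle]

theorem expF_visit_succ_of_stay (t : ℕ) : expF (M.visit π (t + 1)) r = expF (M.visit π 1) r := by
  cases t with
  | zero => rfl
  | succ k => rw [visit_add_two_of_stay hπ, expF_map_settle]

theorem J_succ_of_stay (n : ℕ) :
    M.J π r (n + 1) = expF (M.visit π 0) r + n * expF (M.visit π 1) r :=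
  J_succ_of_expF_visit_succ M π r (expF_visit_succ_of_stay hπ) n

end StayFromTwo

section FirstAction

variable {π : Policy (Fin 3) (Fin 3)} {a : Fin 3} (h0 : ∀ s, π 0 s = PMF.pure a)
include h0

theorem visit_zero_of_first : M.visit π 0 = PMF.pure (1, a) := by
  simp [visit, M, h0, PMF.pure_map]

theorem visit_one_of_first :
    M.visit π 1 = (π 1 (move 1 a)).map fun a' => (move 1 a, a') := by
  rw [visit, visit_zero_of_first h0]
  simp [step, M]

end FirstAction

variable (p : ENNReal) (hp : p ≤ 1)

theorem tail_of_two_le {t : ℕ} (ht : 2 ≤ t) (s : Fin 3) : tail p hp t s = PMF.pure 1 := by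
  simp [tail, show t ≠ 1 by omega]

theorem expF_map_tail_one (s s' : Fin 3) (f : Fin 3 → Fin 3 → ℝ) :
    expF ((tail p hp 1 s').map fun a => (s, a)) f = (1 - p.toReal) * f s 1 + p.toReal * f s 2 := by
  have hp_top : p ≠ ⊤ := ne_top_of_le_ne_top ENNReal.one_ne_top hp
  simp only [tail, if_true, PMF.map_comp, expF_map, Fintype.sum_bool, Function.comp_def]
  -- `erw`: the proof of `p.toNNReal ≤ 1` stored in `tail` has type `p.toNNReal ≤ ENNReal.toNNReal 1`
  erw [PMF.bernoulli_apply, PMF.bernoulli_apply]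
  simp only [cond_true, cond_false, ENNReal.coe_toNNReal hp_top, ENNReal.coe_sub, ENNReal.coe_one,
    ENNReal.toReal_sub_of_le hp ENNReal.one_ne_top, ENNReal.toReal_one, Bool.false_eq_true,
    if_false]
  ring

theorem J_πE (n : ℕ) : M.J πE r (n + 1) = n + 1 := by
  rw [J_succ_of_stay (π := πE) (fun _ _ _ => rfl), visit_one_of_first (fun _ => rfl),
    visit_zero_of_first (fun _ => rfl)]
  simp only [πE, PMF.pure_map, expF_pure]
  norm_num [r, move]
  ring

theorem J_πBC (n : ℕ) : M.J (πBC p hp) r (n + 1) = 1 + n * (1 - p.toReal) := by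
  rw [J_succ_of_stay (fun t ht s => by simp [πBC, tail_of_two_le p hp ht, show t ≠ 0 by omega]),
    visit_one_of_first (a := 1) (fun _ => rfl), visit_zero_of_first (a := 1) (fun _ => rfl),
    show πBC p hp 1 (move 1 1) = tail p hp 1 (move 1 1) from rfl, expF_map_tail_one, expF_pure]
  norm_num [r, move]

theorem J_πMMDP (n : ℕ) : M.J (πMMDP p hp) r (n + 1) = n + 1 := by
  rw [J_succ_of_stay (fun t ht s => by simp [πMMDP, tail_of_two_le p hp ht, show t ≠ 0 by omega]),
    visit_one_of_first (a := 0) (fun _ => rfl), visit_zero_of_first (a := 0) (fun _ => rfl),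
    show πMMDP p hp 1 (move 1 0) = tail p hp 1 (move 1 0) from rfl, expF_map_tail_one, expF_pure]
  norm_num [r, move]
  ring

end Dante

open Dante in
theorem dante_bc_vs_mmdp_general (T : ℕ) (hT : 1 ≤ T) (ε : ℝ) (hε : 0 ≤ ε) :
    ∀ hp : ENNReal.ofReal (ε * T) ≤ 1,
      M.J πE r T - M.J (πBC (ENNReal.ofReal (ε * T)) hp) r T = ε * T * ((T : ℝ) - 1) ∧
      M.J πE r T - M.J (πMMDP (ENNReal.ofReal (ε * T)) hp) r T = 0 := by
  intro hp
  obtain ⟨n, rfl⟩ := Nat.exists_eq_add_of_le' hT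
  have hp_toReal : (ENNReal.ofReal (ε * ↑(n + 1))).toReal = ε * ↑(n + 1) :=
    ENNReal.toReal_ofReal (by positivity)
  rw [J_πE, J_πBC, J_πMMDP, hp_toReal]
  push_cast
  constructor <;> ring

open Dante in
/-- **MMDP vs. behavioral cloning in the Dante MDP.** With the future policies
`π_2, …, π_T` fixed (where `π_2` moves down with probability `ε T`), behavioral cloning's
choice for `π_1` (stay, exactly matching the expert) suffers performance gap
`J(π_E) − J({π_BC, π_{2:T}}) = ε T (T − 1)`, whereas MMDP's choice (move up) achieves
gap `J(π_E) − J({π_MMDP, π_{2:T}}) = 0`. -/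
theorem dante_bc_vs_mmdp (T : ℕ) (hT : 1 ≤ T) (ε : ℝ) (hε : 0 ≤ ε)
    (hεT : ε * T ≤ 1) :
    ∀ hp : ENNReal.ofReal (ε * T) ≤ 1,
      M.J πE r T - M.J (πBC (ENNReal.ofReal (ε * T)) hp) r T = ε * T * ((T : ℝ) - 1) ∧
      M.J πE r T - M.J (πMMDP (ENNReal.ofReal (ε * T)) hp) r T = 0 :=
  dante_bc_vs_mmdp_general T hT ε hε
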